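/- arXiv:1602.02195 — 2 statements merged into one kernel-verified Lean document; each statement's English description precedes it below -/
import Mathlib

section
/- If the Laurent polynomial a(h) has a root of multiplicity > 1 (equivalently, gcd(a, a') is a nonunit in ℂ[h^{±1}]), then the Poisson generalized Weyl algebra A₁ is not Poisson simple: the ideal generated by x, y, and gcd(a,a') is a proper nonzero Poisson ideal. -/
/- Common setup: the Poisson generalized Weyl algebra
   `A₁ = ℂ[h^{±1},x,y]/⟨xy - a(h)⟩` with Poisson bracket
   `{x,h} = hx`, `{y,h} = -hy`, `{y,x} = -a'(h)h`. -/

noncomputable section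
open LaurentPolynomial

/-- `ℂ[h^{±1}]`, the ring of complex Laurent polynomials in `h = T 1`. -/
abbrev L : Type := LaurentPolynomial ℂ

/-- The formal derivative `a'` of a Laurent polynomial `a`. -/
def lderiv (a : L) : L := Finsupp.sum (AddMonoidAlgebra.coeff a) fun n c => LaurentPolynomial.C ((n : ℂ) * c) * T (n - 1)

/-- Evaluation of a Laurent polynomial at a (nonzero) complex number `z`. -/
def leval (z : ℂ) (a : L) : ℂ := Finsupp.sum (AddMonoidAlgebra.coeff a) fun n c => c * z ^ n

/-- The Laurent polynomial `a(γ·h)`. -/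
def lscale (γ : ℂ) (a : L) : L := Finsupp.sum (AddMonoidAlgebra.coeff a) fun n c => LaurentPolynomial.C (c * γ ^ n) * T n

/-- The Laurent polynomial `a(γ·h⁻¹)`. -/
def lsubinv (γ : ℂ) (a : L) : L := Finsupp.sum (AddMonoidAlgebra.coeff a) fun n c => LaurentPolynomial.C (c * γ ^ n) * T (-n)

/-- `B₁ = ℂ[h^{±1}, x, y]` (commutative), with `x = X 0`, `y = X 1`. -/
abbrev B1 : Type := MvPolynomial (Fin 2) L

/-- The inclusion `ℂ[h^{±1}] → ℂ[h^{±1},x,y]`. -/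
def ih : L →+* B1 := MvPolynomial.C

/-- `h ∈ B₁`. -/
def Bh : B1 := ih (T 1)
/-- `x ∈ B₁`. -/
def Bx : B1 := MvPolynomial.X 0
/-- `y ∈ B₁`. -/
def By : B1 := MvPolynomial.X 1

/-- The ideal `⟨xy - a(h)⟩` of `ℂ[h^{±1},x,y]`. -/
def GWI (a : L) : Ideal B1 := Ideal.span {Bx * By - ih a}

/-- The Poisson generalized Weyl algebra `A₁ = ℂ[h^{±1},x,y]/⟨xy - a(h)⟩`, as a
commutative ℂ-algebra. -/
abbrev GW (a : L) : Type := B1 ⧸ GWI a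

/-- The canonical projection `B₁ → A₁`. -/
def gp (a : L) : B1 →+* GW a := Ideal.Quotient.mk (GWI a)
/-- `h ∈ A₁`. -/
def gH (a : L) : GW a := gp a Bh
/-- `x ∈ A₁`. -/
def gX (a : L) : GW a := gp a Bx
/-- `y ∈ A₁`. -/
def gY (a : L) : GW a := gp a By
/-- `h^i ∈ A₁`, for `i : ℤ`. -/
def gHp (a : L) (i : ℤ) : GW a := gp a (ih (T i))

/-- `β` is a Poisson bracket on the commutative ℂ-algebra `A`: ℂ-bilinear (via
linearity in the first argument together with antisymmetry), antisymmetric,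
satisfying the Leibniz rule and the Jacobi identity. -/
def IsPoissonBracket {A : Type} [CommRing A] [Algebra ℂ A] (β : A → A → A) : Prop :=
  (∀ (r : ℂ) (u v w : A), β (r • u + v) w = r • β u w + β v w) ∧
  (∀ u v : A, β u v = - β v u) ∧
  (∀ u v w : A, β (u * v) w = u * β v w + β u w * v) ∧
  (∀ u v w : A, β u (β v w) + β v (β w u) + β w (β u v) = 0)

/-- `β` is the Poisson bracket of the Poisson generalized Weyl algebra `A₁`,
determined by `{x,h} = hx`, `{y,h} = -hy`, `{y,x} = -a'(h)h`. -/
def IsGWBracket (a : L) (β : GW a → GW a → GW a) : Prop :=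
  IsPoissonBracket β ∧
  β (gX a) (gH a) = gH a * gX a ∧
  β (gY a) (gH a) = -(gH a * gY a) ∧
  β (gY a) (gX a) = -(gp a (ih (lderiv a)) * gH a)

/-- The homogeneous component `W_k` of `A₁`: `ℂ[h^{±1}]x^k` for `k > 0`,
`ℂ[h^{±1}]` for `k = 0`, and `ℂ[h^{±1}]y^{-k}` for `k < 0`; namely the ℂ-span of
the elements `h^m x^k` (resp. `h^m`, `h^m y^{-k}`) for `m ∈ ℤ`. -/
def W (a : L) (k : ℤ) : Submodule ℂ (GW a) :=
  Submodule.span ℂ {w | ∃ m : ℤ, w = gHp a m *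
    (if 0 ≤ k then gX a ^ k.toNat else gY a ^ (-k).toNat)}

/-! Modulo `J = (x, y, b(h))` the bracket of any two of the generators `x, y, h, h⁻¹` vanishes:
`{x,h} = hx` and `{y,h} = -hy` lie in `(x, y)`, and `{y,x} = -a'h` lies in `(b)` because `b ∣ a'`.
A Poisson bracket is a biderivation, so then `{A₁, A₁} ⊆ J` and `J` is a Poisson ideal. It is
proper because `A₁ / J ≅ ℂ[h^{±1}] / (b)` with `b ∣ a` a nonunit, and nonzero because `x ≠ 0`.
A double root `λ ≠ 0` of `a` supplies such a `b`, namely `h - λ`. -/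

namespace LaurentPolynomial

variable {R : Type*} [CommRing R]

theorem T_one_sub_C_dvd_of_eval₂_eq_zero (x : Rˣ) {q : R[T;T⁻¹]}
    (hq : eval₂ (RingHom.id R) x q = 0) : T 1 - C (x : R) ∣ q := by
  obtain ⟨n, p, hp⟩ := q.exists_T_pow
  have hroot : p.IsRoot (x : R) := by
    have := congrArg (eval₂ (RingHom.id R) x) hp
    rwa [eval₂_toLaurent, map_mul, hq, zero_mul, Polynomial.eval₂_id] at this
  obtain ⟨c, hc⟩ := Polynomial.dvd_iff_isRoot.mpr hroot
  have hdvd : T 1 - C (x : R) ∣ q * T n := by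
    rw [← hp, hc, map_mul, map_sub, Polynomial.toLaurent_X, Polynomial.toLaurent_C]
    exact dvd_mul_right _ _
  exact (isUnit_T _).dvd_mul_right.mp hdvd

theorem not_isUnit_T_one_sub_C [Nontrivial R] (x : Rˣ) : ¬ IsUnit (T 1 - C (x : R)) := by
  intro hu
  have := hu.map (eval₂ (RingHom.id R) x)
  simp at this

end LaurentPolynomial

theorem leval_eq_eval₂ {z : ℂ} (hz : z ≠ 0) (p : L) :
    _root_.leval z p = eval₂ (RingHom.id ℂ) (Units.mk0 z hz) p := by
  induction p using LaurentPolynomial.induction_on' with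
  | add p q hp hq =>
    rw [map_add, ← hp, ← hq, _root_.leval, _root_.leval, _root_.leval, AddMonoidAlgebra.coeff_add]
    exact Finsupp.sum_add_index' (fun _ => zero_mul _) (fun _ _ _ => add_mul _ _ _)
  | C_mul_T n c =>
    rw [eval₂_C_mul_T, _root_.leval, ← single_eq_C_mul_T, AddMonoidAlgebra.coeff_single,
      Finsupp.sum_single_index (zero_mul _)]
    simp

namespace IsPoissonBracket

variable {A : Type} [CommRing A] [Algebra ℂ A] {β : A → A → A} (hβ : IsPoissonBracket β)
include hβ

theorem add_left (u v w : A) : β (u + v) w = β u w + β v w := by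
  simpa using hβ.1 1 u v w

theorem smul_left (r : ℂ) (u w : A) : β (r • u) w = r • β u w := by
  have hzero : β 0 w = 0 := by simpa using hβ.add_left 0 0 w
  simpa [hzero] using hβ.1 r u 0 w

theorem one_left (w : A) : β 1 w = 0 := by
  simpa using hβ.2.2.1 1 1 w

theorem algebraMap_left (c : ℂ) (w : A) : β (algebraMap ℂ A c) w = 0 := by
  rw [Algebra.algebraMap_eq_smul_one, hβ.smul_left, hβ.one_left, smul_zero]

theorem self (u : A) : β u u = 0 := by
  have h : (2 : ℂ) • β u u = 0 := by
    rw [two_smul]; nth_rewrite 1 [hβ.2.1 u u]; exact neg_add_cancel _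
  simpa using h

theorem mem_comm (J : Ideal A) (u v : A) : β u v ∈ J ↔ β v u ∈ J := by
  rw [hβ.2.1 u v, J.neg_mem_iff]

theorem mem_of_mul_eq_one_left (J : Ideal A) {w w' : A} (hw : w * w' = 1) {v : A}
    (h : β w v ∈ J) : β w' v ∈ J := by
  have hleib : w * β w' v + β w v * w' = 0 := by
    rw [← hβ.2.2.1, hw, hβ.one_left]
  have : β w' v = -(w' * (β w v * w')) := by
    linear_combination w' * hleib - β w' v * hw
  rw [this]
  exact J.neg_mem (J.mul_mem_left _ (J.mul_mem_right _ h))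

theorem mem_of_adjoin_eq_top_left (J : Ideal A) {s : Set A} (hs : Algebra.adjoin ℂ s = ⊤)
    {v : A} (h : ∀ u ∈ s, β u v ∈ J) (u : A) : β u v ∈ J := by
  have hu : u ∈ Algebra.adjoin ℂ s := hs ▸ Algebra.mem_top
  induction hu using Algebra.adjoin_induction with
  | mem u hu => exact h u hu
  | algebraMap c => rw [hβ.algebraMap_left]; exact J.zero_mem
  | add u u' _ _ hu hu' => rw [hβ.add_left]; exact J.add_mem hu hu'
  | mul u u' _ _ hu hu' =>
    rw [hβ.2.2.1]; exact J.add_mem (J.mul_mem_left _ hu') (J.mul_mem_right _ hu)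

theorem mem_of_adjoin_eq_top (J : Ideal A) {s : Set A} (hs : Algebra.adjoin ℂ s = ⊤)
    (h : ∀ u ∈ s, ∀ v ∈ s, β u v ∈ J) (u v : A) : β u v ∈ J := by
  refine hβ.mem_of_adjoin_eq_top_left J hs (fun w hw => ?_) u
  rw [hβ.mem_comm]
  exact hβ.mem_of_adjoin_eq_top_left J hs (fun u hu => h u hu w hw) v

theorem forall_mem_insert_of_mul_eq_one (J : Ideal A) {s : Set A} {w w' : A} (hws : w ∈ s)
    (hw : w * w' = 1) (h : ∀ u ∈ s, ∀ v ∈ s, β u v ∈ J) :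
    ∀ u ∈ insert w' s, ∀ v ∈ insert w' s, β u v ∈ J := by
  rintro u (rfl | hu) v (rfl | hv)
  · rw [hβ.self]; exact J.zero_mem
  · exact hβ.mem_of_mul_eq_one_left J hw (h w hws v hv)
  · rw [hβ.mem_comm]; exact hβ.mem_of_mul_eq_one_left J hw (h w hws u hu)
  · exact h u hu v hv

end IsPoissonBracket

section GW

variable {a : L}

theorem gH_mul_gHp_neg_one : gH a * gHp a (-1) = 1 := by
  rw [gH, gHp, Bh, ← map_mul, ← map_mul, ← T_add]
  simp

theorem gHp_natCast_mul (k : ℕ) (m : ℤ) : gHp a (k * m) = gHp a m ^ k := by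
  rw [gHp, gHp, ← T_pow, map_pow, map_pow]

theorem adjoin_gHp_gX_gY_gH_eq_top : Algebra.adjoin ℂ {gHp a (-1), gX a, gY a, gH a} = ⊤ := by
  set S := Algebra.adjoin ℂ {gHp a (-1), gX a, gY a, gH a}
  have hHp : ∀ n : ℤ, gHp a n ∈ S := by
    intro n
    obtain ⟨k, rfl | rfl⟩ := Int.eq_nat_or_neg n
    · simpa [← gHp_natCast_mul] using
        S.pow_mem (Algebra.subset_adjoin (by simp [gH, gHp, Bh] : gHp a 1 ∈ _)) k
    · simpa [← gHp_natCast_mul] using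
        S.pow_mem (Algebra.subset_adjoin (by simp : gHp a (-1) ∈ _)) k
  rw [eq_top_iff]
  rintro r -
  obtain ⟨f, rfl⟩ := Ideal.Quotient.mk_surjective r
  induction f using MvPolynomial.induction_on with
  | C p =>
    induction p using LaurentPolynomial.induction_on' with
    | add p q hp hq => rw [map_add, map_add]; exact S.add_mem hp hq
    | C_mul_T n c =>
      rw [map_mul, map_mul]
      exact S.mul_mem (S.algebraMap_mem c) (hHp n)
  | add f g hf hg => rw [map_add]; exact S.add_mem hf hg
  | mul_X f i hf =>
    rw [map_mul]
    refine S.mul_mem hf (Algebra.subset_adjoin ?_)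
    fin_cases i <;> simp [gX, gY, gp, Bx, By]

def GWlift {R : Type*} [CommRing R] (f : L →+* R) (u v : R) (huv : u * v = f a) : GW a →+* R :=
  Ideal.Quotient.lift (GWI a) (MvPolynomial.eval₂Hom f ![u, v]) fun p hp => by
    have hle : GWI a ≤ RingHom.ker (MvPolynomial.eval₂Hom f ![u, v]) := by
      rw [GWI, Ideal.span_le, Set.singleton_subset_iff, SetLike.mem_coe, RingHom.mem_ker]
      simp [Bx, By, ih, huv]
    exact hle hp

section GWlift

variable {R : Type*} [CommRing R] (f : L →+* R) (u v : R) (huv : u * v = f a)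

theorem GWlift_gp (p : B1) :
    GWlift f u v huv (gp a p) = MvPolynomial.eval₂Hom f ![u, v] p :=
  Ideal.Quotient.lift_mk _ _ _

@[simp] theorem GWlift_gX : GWlift f u v huv (gX a) = u := by
  simp [gX, GWlift_gp, Bx]

@[simp] theorem GWlift_gY : GWlift f u v huv (gY a) = v := by
  simp [gY, GWlift_gp, By]

@[simp] theorem GWlift_gp_ih (p : L) : GWlift f u v huv (gp a (ih p)) = f p := by
  simp [GWlift_gp, ih]

end GWlift

theorem gX_ne_zero : gX a ≠ 0 := by
  intro h
  simpa using congrArg (GWlift (RingHom.id L) 1 a (one_mul a)) h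

def xybIdeal (a b : L) : Ideal (GW a) := Ideal.span {gX a, gY a, gp a (ih b)}

theorem xybIdeal_ne_bot (b : L) : xybIdeal a b ≠ ⊥ := by
  intro h
  have hx : gX a ∈ xybIdeal a b := Ideal.subset_span (by simp)
  exact gX_ne_zero (by simpa [h] using hx)

theorem xybIdeal_ne_top {b : L} (hba : b ∣ a) (hb : ¬ IsUnit b) : xybIdeal a b ≠ ⊤ := by
  have : Nontrivial (L ⧸ Ideal.span {b}) :=
    Ideal.Quotient.nontrivial_iff.mpr (mt Ideal.span_singleton_eq_top.mp hb)
  let φ := GWlift (a := a) (Ideal.Quotient.mk (Ideal.span {b})) 0 0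
    (by rwa [zero_mul, eq_comm, Ideal.Quotient.eq_zero_iff_mem, Ideal.mem_span_singleton])
  refine ne_top_of_le_ne_top (RingHom.ker_ne_top φ) ?_
  rw [xybIdeal, Ideal.span_le]
  rintro w (rfl | rfl | rfl) <;> simp [φ]

theorem bracket_mem_xybIdeal {β : GW a → GW a → GW a} (hβ : IsGWBracket a β) {b : L}
    (hb : b ∣ lderiv a) (u v : GW a) : β u v ∈ xybIdeal a b := by
  set J := xybIdeal a b
  obtain ⟨hP, hxh, hyh, hyx⟩ := hβ
  have hx : gX a ∈ J := Ideal.subset_span (by simp)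
  have hy : gY a ∈ J := Ideal.subset_span (by simp)
  have hda : gp a (ih (lderiv a)) * gH a ∈ J := by
    obtain ⟨c, hc⟩ := hb
    rw [gH, Bh, ← map_mul, ← map_mul, hc, show b * c * T 1 = c * T 1 * b by ring, map_mul,
      map_mul]
    exact J.mul_mem_left _ (Ideal.subset_span (by simp))
  have hxh : β (gX a) (gH a) ∈ J := by rw [hxh]; exact J.mul_mem_left _ hx
  have hyh : β (gY a) (gH a) ∈ J := by rw [hyh]; exact J.neg_mem (J.mul_mem_left _ hy)
  have hyx : β (gY a) (gX a) ∈ J := by rw [hyx]; exact J.neg_mem hda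
  have hxyh : ∀ u ∈ ({gX a, gY a, gH a} : Set (GW a)), ∀ v ∈ ({gX a, gY a, gH a} : Set (GW a)),
      β u v ∈ J := by
    rintro u (rfl | rfl | rfl) v (rfl | rfl | rfl) <;>
      first
      | (rw [hP.self]; exact J.zero_mem)
      | assumption
      | (rw [hP.mem_comm]; assumption)
  exact hP.mem_of_adjoin_eq_top J adjoin_gHp_gX_gY_gH_eq_top
    (hP.forall_mem_insert_of_mul_eq_one J (by simp) gH_mul_gHp_neg_one hxyh) u v

end GW

theorem GW_not_poisson_simple_general (a : L)
    (β : GW a → GW a → GW a) (hβ : IsGWBracket a β)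
    (hmult : ∃ l : ℂ, l ≠ 0 ∧ leval l a = 0 ∧ leval l (lderiv a) = 0) :
    (∀ b : L, b ∣ a → b ∣ lderiv a → ¬ IsUnit b →
      (Ideal.span {gX a, gY a, gp a (ih b)} ≠ ⊥ ∧
       Ideal.span {gX a, gY a, gp a (ih b)} ≠ ⊤ ∧
       ∀ c ∈ Ideal.span {gX a, gY a, gp a (ih b)}, ∀ r : GW a,
         β c r ∈ Ideal.span {gX a, gY a, gp a (ih b)})) ∧
    (∃ I : Ideal (GW a), I ≠ ⊥ ∧ I ≠ ⊤ ∧ ∀ c ∈ I, ∀ r : GW a, β c r ∈ I) := by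
  have hpoisson : ∀ b : L, b ∣ a → b ∣ lderiv a → ¬ IsUnit b →
      xybIdeal a b ≠ ⊥ ∧ xybIdeal a b ≠ ⊤ ∧ ∀ c ∈ xybIdeal a b, ∀ r : GW a,
        β c r ∈ xybIdeal a b := fun b hba hbd hbu =>
    ⟨xybIdeal_ne_bot b, xybIdeal_ne_top hba hbu, fun c _ r => bracket_mem_xybIdeal hβ hbd c r⟩
  refine ⟨hpoisson, ?_⟩
  obtain ⟨l, hl, hla, hld⟩ := hmult
  rw [leval_eq_eval₂ hl] at hla hld
  exact ⟨_, hpoisson _ (T_one_sub_C_dvd_of_eval₂_eq_zero _ hla)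
    (T_one_sub_C_dvd_of_eval₂_eq_zero _ hld) (not_isUnit_T_one_sub_C _)⟩

/-- If the Laurent polynomial `a` has a root of multiplicity `> 1`
(i.e. a common root `λ ≠ 0` of `a` and `a'`; equivalently `gcd(a,a')` is a
nonunit), then `A₁` is not Poisson simple: for any nonunit common divisor `b` of
`a` and `a'` (such as `gcd(a,a')`), the ideal generated by `x`, `y` and `b(h)`
is a proper nonzero Poisson ideal; in particular there exists a proper nonzero
Poisson ideal. -/
theorem GW_not_poisson_simple (a : L) (ha : a ≠ 0) (hnu : ¬ IsUnit a)
    (β : GW a → GW a → GW a) (hβ : IsGWBracket a β)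
    (hmult : ∃ l : ℂ, l ≠ 0 ∧ leval l a = 0 ∧ leval l (lderiv a) = 0) :
    (∀ b : L, b ∣ a → b ∣ lderiv a → ¬ IsUnit b →
      (Ideal.span {gX a, gY a, gp a (ih b)} ≠ ⊥ ∧
       Ideal.span {gX a, gY a, gp a (ih b)} ≠ ⊤ ∧
       ∀ c ∈ Ideal.span {gX a, gY a, gp a (ih b)}, ∀ r : GW a,
         β c r ∈ Ideal.span {gX a, gY a, gp a (ih b)})) ∧
    (∃ I : Ideal (GW a), I ≠ ⊥ ∧ I ≠ ⊤ ∧ ∀ c ∈ I, ∀ r : GW a, β c r ∈ I) :=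
  GW_not_poisson_simple_general a β hβ hmult
end
end

section
/- If every root of the Laurent polynomial a(h) is simple (equivalently, a and a' generate the unit ideal of ℂ[h^{±1}]), then the Poisson generalized Weyl algebra A₁ is Poisson simple. -/
/- Common setup: the Poisson generalized Weyl algebra
   `A₁ = ℂ[h^{±1},x,y]/⟨xy - a(h)⟩` with Poisson bracket
   `{x,h} = hx`, `{y,h} = -hy`, `{y,x} = -a'(h)h`. -/

noncomputable section
open LaurentPolynomial

/-! The derivation `h⁻¹ {·, h}` acts on the homogeneous piece `ℂ[h^{±1}] x^k`
(or `ℂ[h^{±1}] y^{-k}`) as multiplication by `k`, so a nonzero Poisson ideal `I` contains a nonzero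
homogeneous element, and multiplying it by `y^k` (or `x^k`) gives a nonzero element of `ℂ[h^{±1}]`.
Hence `J = I ∩ ℂ[h^{±1}]` is a nonzero ideal; it is stable under `q ↦ h a q'` (coming from
`{q, x} y`) and, on such elements, under `r ↦ h r'` (coming from `{{q, x}, y}`). Writing
`a = A(h) h^n` and `J ∩ ℂ[h] = (g)` with `h ∤ g`, this says `g ∣ g'A` and `g ∣ (g'A)'`. At a root
of `g` of multiplicity `m`, the first forces `A` to vanish there, simply since `A` is separable, so
`g'A` has multiplicity exactly `m` and `(g'A)'` has multiplicity `m - 1`, contradicting the second.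
So `g` is a unit and `I = A₁`. -/

open Polynomial hiding C

theorem lderiv_C_mul_T (c : ℂ) (n : ℤ) : lderiv (C c * T n) = C (n * c) * T (n - 1) := by
  rw [← single_eq_C_mul_T, lderiv, AddMonoidAlgebra.coeff_single, Finsupp.sum_single_index]
  simp

theorem lderiv_add (p q : L) : lderiv (p + q) = lderiv p + lderiv q := by
  rw [lderiv, lderiv, lderiv, AddMonoidAlgebra.coeff_add, Finsupp.sum_add_index] <;>
    intros <;> simp [mul_add, add_mul]

theorem lderiv_T (n : ℤ) : lderiv (T n) = C (n : ℂ) * T (n - 1) := by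
  simpa using lderiv_C_mul_T 1 n

theorem lderiv_mul (p q : L) : lderiv (p * q) = p * lderiv q + q * lderiv p := by
  induction p using LaurentPolynomial.induction_on' with
  | add p₁ p₂ h₁ h₂ => rw [add_mul, lderiv_add, lderiv_add, h₁, h₂]; ring
  | C_mul_T n c =>
    induction q using LaurentPolynomial.induction_on' with
    | add q₁ q₂ h₁ h₂ => rw [mul_add, lderiv_add, lderiv_add, h₁, h₂]; ring
    | C_mul_T m d =>
      have hT₁ : (T (n + m - 1) : L) = T n * T (m - 1) := by rw [← T_add]; ring_nf
      have hT₂ : (T (n + m - 1) : L) = T m * T (n - 1) := by rw [← T_add]; ring_nf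
      rw [show C c * T n * (C d * T m) = C (c * d) * T (n + m) by rw [map_mul, T_add]; ring,
        lderiv_C_mul_T, lderiv_C_mul_T, lderiv_C_mul_T]
      simp only [map_mul, map_add, Int.cast_add, map_intCast]
      linear_combination (C c * C d * (m : L)) * hT₁ + (C c * C d * (n : L)) * hT₂

theorem lderiv_toLaurent (P : ℂ[X]) : lderiv (toLaurent P) = toLaurent (derivative P) := by
  induction P using Polynomial.induction_on' with
  | add p q hp hq => rw [map_add, lderiv_add, hp, hq, derivative_add, map_add]
  | monomial n c =>
    rw [Polynomial.toLaurent_C_mul_T, lderiv_C_mul_T, derivative_monomial,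
      Polynomial.toLaurent_C_mul_T]
    cases n with
    | zero => simp
    | succ k => push_cast; ring_nf

theorem lderiv_toLaurent_mul_T (P : ℂ[X]) (n : ℤ) :
    lderiv (toLaurent P * T n) = toLaurent (X * derivative P + (n : ℂ[X]) * P) * T (n - 1) := by
  have hT : (T n : L) = T 1 * T (n - 1) := by rw [← T_add]; ring_nf
  rw [lderiv_mul, lderiv_T, lderiv_toLaurent, map_add, map_mul, map_mul, toLaurent_X, hT]
  simp only [map_intCast]
  ring

namespace Derivation

theorem map_pow_of_map_eq_mul {R A : Type*} [CommSemiring R] [CommSemiring A]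
    [Algebra R A] (D : Derivation R A A) {u c : A} (h : D u = c * u) (n : ℕ) :
    D (u ^ n) = n * c * u ^ n := by
  induction n with
  | zero => simp
  | succ n ih => rw [pow_succ, D.leibniz, ih, h, smul_eq_mul, smul_eq_mul]; push_cast; ring

variable {A : Type*} [CommRing A] [Algebra ℂ A] [Algebra L A]
  (D : Derivation ℂ A A)

theorem map_algebraMap_T_eq_lderiv_mul (n : ℤ) :
    D (algebraMap L A (T n)) = algebraMap L A (lderiv (T n)) * D (algebraMap L A (T 1)) := by
  induction n using Int.induction_on with
  | zero => rw [T_zero, map_one, D.map_one_eq_zero, ← T_zero, lderiv_T]; simp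
  | succ n ih =>
    have hT : (T n : L) = T 1 * T (n - 1) := by rw [← T_add]; ring_nf
    have hL : lderiv (T (n + 1)) = T n + T 1 * lderiv (T n) := by
      simp only [lderiv_T, add_sub_cancel_right, Int.cast_add, Int.cast_one, map_add, map_one]
      rw [hT]
      ring
    rw [T_add, map_mul, D.leibniz, ih, ← T_add, hL, map_add, map_mul, smul_eq_mul, smul_eq_mul]
    ring
  | pred n ih =>
    have hT : (T (-n - 1 - 1) : L) = T (-1) * T (-n - 1) := by rw [← T_add]; ring_nf
    have hL : lderiv (T (-n - 1)) = T (-1) * (lderiv (T (-n)) - T (-n - 1)) := by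
      simp only [lderiv_T, Int.cast_sub, Int.cast_one, map_sub, map_one, hT]
      ring
    have hunit : algebraMap L A (T (-1)) * algebraMap L A (T 1) = 1 := by
      rw [← map_mul, ← T_add]; simp
    have hlb := D.leibniz (algebraMap L A (T (-n - 1))) (algebraMap L A (T 1))
    rw [← map_mul, ← T_add, sub_add_cancel, ih, smul_eq_mul, smul_eq_mul] at hlb
    rw [hL, map_mul, map_sub]
    linear_combination -algebraMap L A (T (-1)) * hlb - D (algebraMap L A (T (-n - 1))) * hunit

theorem map_algebraMap_eq_lderiv_mul [IsScalarTower ℂ L A] (q : L) :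
    D (algebraMap L A q) = algebraMap L A (lderiv q) * D (algebraMap L A (T 1)) := by
  induction q using LaurentPolynomial.induction_on' with
  | add p q hp hq => rw [map_add, map_add, hp, hq, lderiv_add, map_add, add_mul]
  | C_mul_T n c =>
    have hC : algebraMap L A (C c) = algebraMap ℂ A c := by
      rw [LaurentPolynomial.C_eq_algebraMap, ← IsScalarTower.algebraMap_apply]
    rw [map_mul, hC, ← Algebra.smul_def, D.map_smul, map_algebraMap_T_eq_lderiv_mul,
      Algebra.smul_def, ← hC, lderiv_C_mul_T, lderiv_T]
    simp only [map_mul]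
    ring

end Derivation

namespace Polynomial

variable {K : Type*} [Field K]

theorem derivative_ne_zero_of_isRoot [CharZero K] {P : K[X]} {z : K} (hP : P ≠ 0)
    (hz : P.IsRoot z) : derivative P ≠ 0 := fun h => by
  rw [eq_C_of_derivative_eq_zero h, IsRoot, eval_C] at hz
  exact hP (by rw [eq_C_of_derivative_eq_zero h, hz, map_zero])

theorem isUnit_of_dvd_derivative_mul [IsAlgClosed K] [CharZero K] {g A : K[X]} (hg : g ≠ 0)
    (hA : A.Separable) (h₁ : g ∣ derivative g * A) (h₂ : g ∣ derivative (derivative g * A)) :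
    IsUnit g := by
  by_contra hu
  obtain ⟨z, hz⟩ := IsAlgClosed.exists_root g fun h => hu (isUnit_iff_degree_eq_zero.mpr h)
  have hm := (rootMultiplicity_pos hg).mpr hz
  have hF : derivative g * A ≠ 0 := mul_ne_zero (derivative_ne_zero_of_isRoot hg hz) hA.ne_zero
  have hle₁ := rootMultiplicity_le_rootMultiplicity_of_dvd hF h₁ z
  rw [rootMultiplicity_mul hF, derivative_rootMultiplicity_of_root hz] at hle₁
  have hA₁ := rootMultiplicity_le_one_of_separable hA z
  have hFz : (derivative g * A).IsRoot z := (rootMultiplicity_pos hF).mp <| by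
    rw [rootMultiplicity_mul hF]; omega
  have hle₂ := rootMultiplicity_le_rootMultiplicity_of_dvd
    (derivative_ne_zero_of_isRoot hF hFz) h₂ z
  rw [derivative_rootMultiplicity_of_root hFz, rootMultiplicity_mul hF,
    derivative_rootMultiplicity_of_root hz] at hle₂
  omega

end Polynomial

namespace LaurentPolynomial

variable {R : Type*} [CommRing R]

theorem exists_eq_toLaurent_mul_T {p : R[T;T⁻¹]} (hp : p ≠ 0) :
    ∃ (P : R[X]) (n : ℤ), ¬ X ∣ P ∧ p = toLaurent P * T n := by
  obtain ⟨n, P₀, hP₀⟩ := p.exists_T_pow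
  have hP₀0 : P₀ ≠ 0 := by
    rintro rfl
    exact hp (by simpa using congrArg (· * T (-n : ℤ)) hP₀.symm)
  obtain ⟨P, hP, hXP⟩ := P₀.exists_eq_pow_rootMultiplicity_mul_and_not_dvd hP₀0 0
  simp only [map_zero, sub_zero] at hP hXP
  set k := rootMultiplicity 0 P₀
  have h : p * T n = toLaurent P * T k := by rw [← hP₀, hP, map_mul, toLaurent_X_pow, mul_comm]
  refine ⟨P, k - n, hXP, ?_⟩
  calc p = p * T n * T (-n) := by rw [mul_T_assoc]; simp
    _ = toLaurent P * T (k - n) := by rw [h, mul_T_assoc, sub_eq_add_neg]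

theorem isCoprime_eval_of_isCoprime_toLaurent {K : Type*} [Field K] {P Q : K[X]}
    (h : IsCoprime (toLaurent P) (toLaurent Q)) {z : K} (hz : z ≠ 0) :
    IsCoprime (P.eval z) (Q.eval z) := by
  have h' := h.map (eval₂ (RingHom.id K) (Units.mk0 z hz))
  rwa [eval₂_toLaurent, eval₂_toLaurent] at h'

theorem _root_.Ideal.exists_toLaurent_generator {K : Type*} [Field K] {J : Ideal K[T;T⁻¹]}
    (hJ : J ≠ ⊥) : ∃ g : K[X], ¬ X ∣ g ∧ toLaurent g ∈ J ∧ ∀ P, toLaurent P ∈ J → g ∣ P := by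
  obtain ⟨g₀, hg₀⟩ := (IsPrincipalIdealRing.principal (J.comap toLaurent)).principal
  have hmem : ∀ P, toLaurent P ∈ J ↔ g₀ ∣ P := fun P => by
    rw [← Ideal.mem_comap, hg₀, Ideal.submodule_span_eq, Ideal.mem_span_singleton]
  obtain ⟨p, hpJ, hp0⟩ := Submodule.exists_mem_ne_zero_of_ne_bot hJ
  obtain ⟨P, n, hXP, rfl⟩ := exists_eq_toLaurent_mul_T hp0
  have hg₀0 : g₀ ≠ 0 := by
    rintro rfl
    have hP0 := (hmem P).mp ((J.mul_unit_mem_iff_mem (isUnit_T n)).mp hpJ)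
    rw [zero_dvd_iff] at hP0
    exact hXP (hP0 ▸ dvd_zero X)
  obtain ⟨g, hg, hXg⟩ := g₀.exists_eq_pow_rootMultiplicity_mul_and_not_dvd hg₀0 0
  simp only [map_zero, sub_zero] at hg hXg
  refine ⟨g, hXg, ?_, fun Q hQ => (Dvd.intro_left _ hg.symm).trans ((hmem Q).mp hQ)⟩
  rw [← J.mul_unit_mem_iff_mem (isUnit_T (rootMultiplicity 0 g₀)), ← toLaurent_X_pow, mul_comm,
    ← map_mul, ← hg, hmem]

end LaurentPolynomial

theorem separable_of_isCoprime_lderiv {A : ℂ[X]} (hXA : ¬ X ∣ A) {n : ℤ}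
    (h : IsCoprime (toLaurent A * T n) (lderiv (toLaurent A * T n))) : A.Separable := by
  rw [lderiv_toLaurent_mul_T] at h
  rw [separable_def, isCoprime_iff_aeval_ne_zero_of_isAlgClosed ℂ ℂ]
  intro z
  by_contra! hz
  simp only [coe_aeval_eq_eval] at hz
  have hz0 : z ≠ 0 := by
    rintro rfl
    exact hXA (X_dvd_iff.mpr (by rw [coeff_zero_eq_eval_zero, hz.1]))
  have hc := isCoprime_eval_of_isCoprime_toLaurent h.of_mul_left_left.of_mul_right_left hz0
  simp [hz.1, hz.2] at hc

theorem Ideal.eq_top_of_lderiv_mul_mem {a : L} (ha : a ≠ 0)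
    (hsimple : Ideal.span {a, lderiv a} = ⊤) {J : Ideal L} (hJ : J ≠ ⊥)
    (h₁ : ∀ q ∈ J, lderiv q * T 1 * a ∈ J)
    (h₂ : ∀ q ∈ J, T 1 * lderiv (lderiv q * T 1 * a) ∈ J) : J = ⊤ := by
  obtain ⟨A, n, hXA, rfl⟩ := exists_eq_toLaurent_mul_T ha
  have hA : A.Separable := separable_of_isCoprime_lderiv hXA
    (Ideal.mem_span_pair.mp (hsimple ▸ Submodule.mem_top))
  obtain ⟨g, hXg, hgJ, hg⟩ := J.exists_toLaurent_generator hJ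
  have hdvd {P : ℂ[X]} {m : ℤ} (hP : toLaurent P * T m ∈ J) : g ∣ P :=
    hg P ((J.mul_unit_mem_iff_mem (isUnit_T m)).mp hP)
  set F := derivative g * A
  have hF : lderiv (toLaurent g) * T 1 * (toLaurent A * T n) = toLaurent F * T (n + 1) := by
    rw [lderiv_toLaurent, map_mul, T_add]; ring
  have hF' : T 1 * lderiv (toLaurent F * T (n + 1))
      = toLaurent (X * derivative F + ((n + 1 : ℤ) : ℂ[X]) * F) * T (n + 1) := by
    rw [lderiv_toLaurent_mul_T, add_sub_cancel_right, T_add n]; ring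
  have hgF : g ∣ F := hdvd (hF ▸ h₁ _ hgJ)
  have hgXF' : g ∣ X * derivative F :=
    (dvd_add_left (hgF.mul_left _)).mp (hdvd (hF' ▸ hF ▸ h₂ _ hgJ))
  have hgF' : g ∣ derivative F :=
    (irreducible_X.coprime_iff_not_dvd.mpr hXg).symm.dvd_of_dvd_mul_left hgXF'
  have hg0 : g ≠ 0 := fun h => hXg (h ▸ dvd_zero X)
  exact J.eq_top_of_isUnit_mem hgJ
    ((isUnit_of_dvd_derivative_mul hg0 hA hgF hgF').map toLaurent)

theorem Submodule.mem_of_sum_mem_of_mem_eigenspace {K V ι : Type*} [Field K] [AddCommGroup V]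
    [Module K V] {f : Module.End K V} {p : Submodule K V} (hp : ∀ x ∈ p, f x ∈ p)
    {χ : ι → K} (hχ : Function.Injective χ) (s : Finset ι) (v : ι → V)
    (hv : ∀ i ∈ s, v i ∈ f.eigenspace (χ i)) (hs : ∑ i ∈ s, v i ∈ p) : ∀ i ∈ s, v i ∈ p := by
  classical
  induction s using Finset.induction_on generalizing v with
  | empty => simp
  | insert j s hj ih =>
    simp only [Module.End.mem_eigenspace_iff, Finset.mem_insert, forall_eq_or_imp] at hv ⊢
    rw [Finset.sum_insert hj] at hs
    -- `f - χ j` kills `v j` and rescales the other eigenvectors by nonzero factors.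
    have hrest : ∀ i ∈ s, (χ i - χ j) • v i ∈ p := by
      refine ih _ (fun i hi => ?_) ?_
      · rw [Module.End.mem_eigenspace_iff, map_smul, hv.2 i hi, smul_comm]
      · have h := p.sub_mem (hp _ hs) (p.smul_mem (χ j) hs)
        rw [map_add, map_sum, hv.1, smul_add, Finset.smul_sum] at h
        convert h using 1
        rw [add_sub_add_left_eq_sub, ← Finset.sum_sub_distrib]
        exact Finset.sum_congr rfl fun i hi => by rw [hv.2 i hi, sub_smul]
    have hs' : ∀ i ∈ s, v i ∈ p := fun i hi => by
      have hne : χ i - χ j ≠ 0 := sub_ne_zero.mpr (hχ.ne (ne_of_mem_of_not_mem hi hj))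
      simpa [smul_smul, inv_mul_cancel₀ hne] using p.smul_mem (χ i - χ j)⁻¹ (hrest i hi)
    exact ⟨by simpa using p.sub_mem hs (p.sum_mem hs'), hs'⟩

namespace IsPoissonBracket

variable {A : Type} [CommRing A] [Algebra ℂ A] {β : A → A → A}

theorem bracket_zero_left (hβ : IsPoissonBracket β) (w : A) : β 0 w = 0 := by
  simpa using hβ.1 1 0 0 w

theorem bracket_self (hβ : IsPoissonBracket β) (u : A) : β u u = 0 := by
  have h : (2 : ℂ) • β u u = 0 := by
    rw [two_smul]; nth_rewrite 1 [hβ.2.1]; exact neg_add_cancel _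
  simpa using h

def toDerivation (hβ : IsPoissonBracket β) (w : A) : Derivation ℂ A A :=
  Derivation.mk'
    { toFun := (β · w)
      map_add' := fun u v => by simpa using hβ.1 1 u v w
      map_smul' := fun r u => by simpa [hβ.bracket_zero_left] using hβ.1 r u 0 w }
    fun u v => by rw [smul_eq_mul, smul_eq_mul, mul_comm v]; exact hβ.2.2.1 u v w

@[simp]
theorem toDerivation_apply (hβ : IsPoissonBracket β) (w u : A) : hβ.toDerivation w u = β u w :=
  rfl

end IsPoissonBracket

section WeylAlgebra

variable {a : L}

theorem gp_ih (q : L) : gp a (ih q) = algebraMap L (GW a) q := rfl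

theorem gH_eq : gH a = algebraMap L (GW a) (T 1) := rfl

theorem gX_mul_gY : gX a * gY a = algebraMap L (GW a) a :=
  (map_mul (gp a) _ _).symm.trans (Ideal.Quotient.eq.mpr (Ideal.subset_span rfl))

-- `rw [Algebra.smul_def]` fails on `GW a`: its `L`-action is found via `Submodule.Quotient`.
theorem GW.smul_def (b : L) (v : GW a) : b • v = algebraMap L (GW a) b * v :=
  Algebra.smul_def b v

theorem algebraMap_T_neg_one_mul_gH : algebraMap L (GW a) (T (-1)) * gH a = 1 := by
  rw [gH_eq, ← map_mul, ← T_add]; simp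

variable (a) in
def gPow (k : ℤ) : GW a := if 0 ≤ k then gX a ^ k.toNat else gY a ^ (-k).toNat

theorem gPow_of_nonneg {k : ℤ} (hk : 0 ≤ k) : gPow a k = gX a ^ k.toNat := if_pos hk

theorem gPow_of_nonpos {k : ℤ} (hk : k ≤ 0) : gPow a k = gY a ^ (-k).toNat := by
  rcases hk.lt_or_eq with hk | rfl
  · exact if_neg hk.not_ge
  · simp [gPow]

theorem gPow_mul_gX (k : ℤ) : gPow a k * gX a = (if k < 0 then a else 1) • gPow a (k + 1) := by
  split_ifs with hk
  · rw [gPow_of_nonpos hk.le, gPow_of_nonpos (by omega : k + 1 ≤ 0),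
      show (-k).toNat = (-(k + 1)).toNat + 1 by omega, pow_succ, mul_assoc, mul_comm (gY a),
      gX_mul_gY, GW.smul_def]
    ring
  · rw [gPow_of_nonneg (by omega), gPow_of_nonneg (by omega : 0 ≤ k + 1),
      show (k + 1).toNat = k.toNat + 1 by omega, pow_succ, one_smul]

theorem gPow_mul_gY (k : ℤ) : gPow a k * gY a = (if 0 < k then a else 1) • gPow a (k - 1) := by
  split_ifs with hk
  · rw [gPow_of_nonneg hk.le, gPow_of_nonneg (by omega : 0 ≤ k - 1),
      show k.toNat = (k - 1).toNat + 1 by omega, pow_succ, mul_assoc, gX_mul_gY,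
      GW.smul_def]
    ring
  · rw [gPow_of_nonpos (by omega), gPow_of_nonpos (by omega : k - 1 ≤ 0),
      show (-(k - 1)).toNat = (-k).toNat + 1 by omega, pow_succ, one_smul]

theorem gPow_mul_gPow_neg (k : ℤ) :
    gPow a k * gPow a (-k) = algebraMap L (GW a) (a ^ k.natAbs) := by
  rcases le_total 0 k with hk | hk
  · rw [gPow_of_nonneg hk, gPow_of_nonpos (by omega : -k ≤ 0), neg_neg, ← mul_pow (gX a),
      gX_mul_gY, ← map_pow, show k.natAbs = k.toNat by omega]
  · rw [gPow_of_nonpos hk, gPow_of_nonneg (by omega : 0 ≤ -k), ← mul_pow (gY a),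
      mul_comm (gY a), gX_mul_gY, ← map_pow, show k.natAbs = (-k).toNat by omega]

theorem span_range_gPow : Submodule.span L (Set.range (gPow a)) = ⊤ := by
  set S := Submodule.span L (Set.range (gPow a))
  have hmul {w : GW a} (hw : ∀ k, gPow a k * w ∈ S) : ∀ u ∈ S, u * w ∈ S := fun u hu =>
    (Submodule.map_span_le (LinearMap.mulRight L w) _ S).mpr
      (by rintro _ ⟨k, rfl⟩; exact hw k) ⟨u, hu, rfl⟩
  have hX := hmul fun k => gPow_mul_gX k ▸ S.smul_mem _ (Submodule.subset_span ⟨k + 1, rfl⟩)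
  have hY := hmul fun k => gPow_mul_gY k ▸ S.smul_mem _ (Submodule.subset_span ⟨k - 1, rfl⟩)
  refine Submodule.eq_top_iff'.mpr fun u => ?_
  obtain ⟨B, rfl⟩ := Ideal.Quotient.mk_surjective u
  induction B using MvPolynomial.induction_on with
  | C q =>
    have h := S.smul_mem q (Submodule.subset_span ⟨0, rfl⟩)
    rwa [show gPow a 0 = 1 by simp [gPow], GW.smul_def, mul_one] at h
  | add p q hp hq => rw [map_add]; exact S.add_mem hp hq
  | mul_X p i hp =>
    rw [map_mul]
    fin_cases i
    · exact hX _ hp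
    · exact hY _ hp

end WeylAlgebra

namespace IsGWBracket

variable {a : L} {β : GW a → GW a → GW a} (hβ : IsGWBracket a β)
include hβ

theorem bracket_algebraMap_left (q : L) (w : GW a) :
    β (algebraMap L (GW a) q) w = algebraMap L (GW a) (lderiv q) * β (gH a) w :=
  @Derivation.map_algebraMap_eq_lderiv_mul (GW a) _ _ _ (hβ.1.toDerivation w) _ q

theorem bracket_algebraMap_gX (q : L) :
    β (algebraMap L (GW a) q) (gX a) = -(algebraMap L (GW a) (lderiv q * T 1) * gX a) := by
  rw [hβ.bracket_algebraMap_left, hβ.1.2.1, hβ.2.1, map_mul, gH_eq]; ring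

theorem bracket_algebraMap_mul_gX_gY (f : L) :
    β (algebraMap L (GW a) f * gX a) (gY a) = algebraMap L (GW a) (T 1 * lderiv (f * a)) := by
  rw [hβ.1.2.2.1, hβ.bracket_algebraMap_left, hβ.1.2.1 (gX a), hβ.1.2.1 (gH a), hβ.2.2.1,
    hβ.2.2.2, lderiv_mul, gp_ih]
  simp only [map_mul, map_add, gH_eq]
  linear_combination (algebraMap L (GW a) (lderiv f) * algebraMap L (GW a) (T 1)) * gX_mul_gY

theorem bracket_gPow_gH (k : ℤ) : β (gPow a k) (gH a) = k * (gH a * gPow a k) := by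
  rcases le_total 0 k with hk | hk
  · have h := (hβ.1.toDerivation (gH a)).map_pow_of_map_eq_mul hβ.2.1 k.toNat
    rw [IsPoissonBracket.toDerivation_apply] at h
    rw [gPow_of_nonneg hk, h, ← Int.cast_natCast, Int.toNat_of_nonneg hk]
    ring
  · have h := (hβ.1.toDerivation (gH a)).map_pow_of_map_eq_mul (c := -gH a)
      (by rw [IsPoissonBracket.toDerivation_apply, hβ.2.2.1]; ring) (-k).toNat
    rw [IsPoissonBracket.toDerivation_apply] at h
    rw [gPow_of_nonpos hk, h, ← Int.cast_natCast,
      Int.toNat_of_nonneg (neg_nonneg.mpr hk), Int.cast_neg]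
    ring

def degreeOperator : Module.End ℂ (GW a) :=
  LinearMap.mulLeft ℂ (algebraMap L (GW a) (T (-1))) ∘ₗ (hβ.1.toDerivation (gH a)).toLinearMap

theorem degreeOperator_apply (u : GW a) :
    hβ.degreeOperator u = algebraMap L (GW a) (T (-1)) * β u (gH a) := rfl

theorem smul_gPow_mem_eigenspace (b : L) (k : ℤ) :
    b • gPow a k ∈ hβ.degreeOperator.eigenspace (k : ℂ) := by
  rw [Module.End.mem_eigenspace_iff, degreeOperator_apply, GW.smul_def, hβ.1.2.2.1,
    hβ.bracket_algebraMap_left, hβ.1.bracket_self, hβ.bracket_gPow_gH, Int.cast_smul_eq_zsmul,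
    zsmul_eq_mul]
  linear_combination ((k : GW a) * algebraMap L (GW a) b * gPow a k) * algebraMap_T_neg_one_mul_gH

variable {I : Ideal (GW a)} (hI : ∀ c ∈ I, ∀ r : GW a, β c r ∈ I)
include hI

theorem exists_ne_zero_algebraMap_mem (ha : a ≠ 0) (hI0 : I ≠ ⊥) :
    ∃ p : L, p ≠ 0 ∧ algebraMap L (GW a) p ∈ I := by
  obtain ⟨u, huI, hu0⟩ := Submodule.exists_mem_ne_zero_of_ne_bot hI0
  obtain ⟨c, rfl⟩ := Finsupp.mem_span_range_iff_exists_finsupp.mp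
    (span_range_gPow (a := a) ▸ Submodule.mem_top : u ∈ Submodule.span L (Set.range (gPow a)))
  obtain ⟨k, hk⟩ := (Finsupp.support_nonempty_iff (f := c)).mpr
    fun hc => hu0 (by rw [hc, Finsupp.sum_zero_index])
  -- `I` is stable under the degree operator, so it contains each homogeneous component of `u`.
  have hkI := Submodule.mem_of_sum_mem_of_mem_eigenspace (p := I.restrictScalars ℂ)
    (fun x hx => by
      rw [Submodule.restrictScalars_mem, degreeOperator_apply]; exact I.mul_mem_left _ (hI x hx _))
    Int.cast_injective c.support (fun k => c k • gPow a k)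
    (fun k _ => hβ.smul_gPow_mem_eigenspace (c k) k) huI k hk
  refine ⟨c k * a ^ k.natAbs, mul_ne_zero (Finsupp.mem_support_iff.mp hk) (pow_ne_zero _ ha), ?_⟩
  convert I.mul_mem_left (gPow a (-k)) hkI using 1
  rw [GW.smul_def, map_mul, ← gPow_mul_gPow_neg]
  ring

theorem algebraMap_lderiv_mul_mem {q : L} (hq : algebraMap L (GW a) q ∈ I) :
    algebraMap L (GW a) (lderiv q * T 1 * a) ∈ I := by
  convert I.mul_mem_left (gY a) (I.neg_mem (hI _ hq (gX a))) using 1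
  rw [hβ.bracket_algebraMap_gX, map_mul, map_mul]
  linear_combination (-(algebraMap L (GW a) (lderiv q) * algebraMap L (GW a) (T 1))) * gX_mul_gY

theorem algebraMap_T_mul_lderiv_mem {q : L} (hq : algebraMap L (GW a) q ∈ I) :
    algebraMap L (GW a) (T 1 * lderiv (lderiv q * T 1 * a)) ∈ I := by
  have hneg (w : GW a) : β (-w) (gY a) = -β w (gY a) := (hβ.1.toDerivation (gY a)).map_neg w
  have h := I.neg_mem (hI _ (hI _ hq (gX a)) (gY a))
  rwa [hβ.bracket_algebraMap_gX, hneg, neg_neg, hβ.bracket_algebraMap_mul_gX_gY] at h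

end IsGWBracket

theorem GW_poisson_simple_general (a : L) (ha : a ≠ 0)
    (β : GW a → GW a → GW a) (hβ : IsGWBracket a β)
    (hsimple : Ideal.span {a, lderiv a} = (⊤ : Ideal L)) :
    ∀ I : Ideal (GW a), (∀ c ∈ I, ∀ r : GW a, β c r ∈ I) → I = ⊥ ∨ I = ⊤ := by
  intro I hI
  refine or_iff_not_imp_left.mpr fun hI0 => ?_
  obtain ⟨p, hp0, hpI⟩ := hβ.exists_ne_zero_algebraMap_mem hI ha hI0
  have hJ : I.comap (algebraMap L (GW a)) = ⊤ :=
    Ideal.eq_top_of_lderiv_mul_mem ha hsimple ((Submodule.ne_bot_iff _).mpr ⟨p, hpI, hp0⟩)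
      (fun _ => hβ.algebraMap_lderiv_mul_mem hI) (fun _ => hβ.algebraMap_T_mul_lderiv_mem hI)
  exact Ideal.comap_eq_top_iff.mp hJ

/-- If every root of the Laurent polynomial `a` is simple
(equivalently, `a` and `a'` generate the unit ideal of `ℂ[h^{±1}]`), then the
Poisson generalized Weyl algebra `A₁` is Poisson simple. -/
theorem GW_poisson_simple (a : L) (ha : a ≠ 0) (hnu : ¬ IsUnit a)
    (β : GW a → GW a → GW a) (hβ : IsGWBracket a β)
    (hsimple : Ideal.span {a, lderiv a} = (⊤ : Ideal L)) :
    ∀ I : Ideal (GW a), (∀ c ∈ I, ∀ r : GW a, β c r ∈ I) → I = ⊥ ∨ I = ⊤ :=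
  GW_poisson_simple_general a ha β hβ hsimple
end
end
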